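/- Let B = (V,E) be a finite connected graph with an odd number n of vertices whose edge isoperimetric constant satisfies i_e(B) ≥ ε > 0, and let μ be the free-boundary Ising Gibbs measure on {−1,+1}^V at inverse temperature β with zero external field. Then the spectral gap of the heat-bath Glauber dynamics satisfies c_gap(μ) ≤ 2(n+2) · 2^n · e^{−βε(n−1)}; in particular, for every β > (log 2)/ε there exists θ = θ(β,ε) > 0 such that c_gap(μ) ≤ e^{−θ n} for all sufficiently large n. -/

import Mathlib

/- Common framework: Ising model with boundary conditions on (finite pieces of)
   locally finite graphs, heat-bath Glauber dynamics quantities. -/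

open Finset
open scoped Classical

noncomputable section

namespace IsingGlauber

/-- The real spin value of a Boolean spin: `true ↦ +1`, `false ↦ -1`. -/
def spin (b : Bool) : ℝ := if b then 1 else -1

variable {V : Type*}

/-- Neighbourhood finset of a vertex, from an explicit local finiteness witness. -/
def nbr (G : SimpleGraph V) (hlf : G.LocallyFinite) (x : V) : Finset V :=
  @SimpleGraph.neighborFinset V G x (hlf x)

/-- `G` is `(g,o)`-growing: every vertex `x` (say at distance `r` from `o`) has at
    least `g` more neighbours in level `r+1` than in the ball of radius `r`. -/
def IsGrowing (G : SimpleGraph V) (hlf : G.LocallyFinite) (g : ℕ) (o : V) : Prop :=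
  ∀ x : V,
    ((nbr G hlf x).filter fun z => G.dist o z ≤ G.dist o x).card + g ≤
      ((nbr G hlf x).filter fun z => G.dist o z = G.dist o x + 1).card

variable [DecidableEq V]

/-- External vertex boundary of a finite vertex set. -/
def vbd (G : SimpleGraph V) (hlf : G.LocallyFinite) (A : Finset V) : Finset V :=
  A.biUnion (fun a => nbr G hlf a) \ A

/-- Closure `A ∪ ∂_V A` of a finite vertex set. -/
def cl (G : SimpleGraph V) (hlf : G.LocallyFinite) (A : Finset V) : Finset V :=
  A ∪ vbd G hlf A

/-- Ising Hamiltonian (zero field) with boundary: `Σ_{(x,y) ∈ E(A ∪ ∂_V A)} σ_x σ_y`,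
    the sum over edges with both endpoints in `A ∪ ∂_V A` (each edge counted once). -/
def energyB (G : SimpleGraph V) (hlf : G.LocallyFinite) (A : Finset V) (σ : V → Bool) : ℝ :=
  (1 / 2) * ∑ x ∈ cl G hlf A, ∑ y ∈ (cl G hlf A).filter (fun y => G.Adj x y),
    spin (σ x) * spin (σ y)

/-- Free-boundary Ising Hamiltonian: `Σ_{(x,y) ∈ E(A)} σ_x σ_y`,
    the sum over edges with both endpoints in `A` (each edge counted once). -/
def energyF (G : SimpleGraph V) (A : Finset V) (σ : V → Bool) : ℝ :=
  (1 / 2) * ∑ x ∈ A, ∑ y ∈ A.filter (fun y => G.Adj x y), spin (σ x) * spin (σ y)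

/-- The configuration equal to `p` on `A` and to `η` off `A`. -/
def patch (A : Finset V) (η : V → Bool) (p : ∀ a ∈ A, Bool) : V → Bool :=
  fun v => if h : v ∈ A then p v h else η v

/-- Unnormalised Gibbs sum over configurations agreeing with `η` off `A`,
    with energy functional `E` (which should already include the factor `β`). -/
def wsum (E : (V → Bool) → ℝ) (A : Finset V) (η : V → Bool) (f : (V → Bool) → ℝ) : ℝ :=
  ∑ p ∈ A.pi (fun _ => (Finset.univ : Finset Bool)),
    Real.exp (E (patch A η p)) * f (patch A η p)

/-- Gibbs expectation of `f` for the measure on region `A` with boundary condition `η`. -/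
def gExp (E : (V → Bool) → ℝ) (A : Finset V) (η : V → Bool) (f : (V → Bool) → ℝ) : ℝ :=
  wsum E A η f / wsum E A η (fun _ => 1)

/-- Gibbs probability of an event. -/
def gProb (E : (V → Bool) → ℝ) (A : Finset V) (η : V → Bool) (P : (V → Bool) → Prop) : ℝ :=
  gExp E A η (fun σ => if P σ then 1 else 0)

/-- Gibbs variance of `f`. -/
def gVar (E : (V → Bool) → ℝ) (A : Finset V) (η : V → Bool) (f : (V → Bool) → ℝ) : ℝ :=
  gExp E A η (fun σ => f σ ^ 2) - gExp E A η f ^ 2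

/-- Dirichlet form of the heat-bath Glauber dynamics:
    `D(f) = Σ_{x ∈ A} μ(Var_x(f))`, where `Var_x(f)(σ)` is the variance of `f`
    under the one-site conditional Gibbs measure at `x` given `σ` elsewhere. -/
def dirich (E : (V → Bool) → ℝ) (A : Finset V) (η : V → Bool) (f : (V → Bool) → ℝ) : ℝ :=
  ∑ x ∈ A, gExp E A η (fun σ => gVar E {x} σ f)

/-- Spectral gap `c_gap(μ) = inf { D(f)/Var(f) : Var(f) ≠ 0 }`. -/
def cgap (E : (V → Bool) → ℝ) (A : Finset V) (η : V → Bool) : ℝ :=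
  sInf {r : ℝ | ∃ f : (V → Bool) → ℝ, gVar E A η f ≠ 0 ∧ r = dirich E A η f / gVar E A η f}

/-- The edge boundary of `C`, encoded as ordered pairs `(u,v)` with `u ∈ C`,
    `v ∉ C` and `u ~ v`; these pairs are in bijection with the boundary edges. -/
def obd (G : SimpleGraph V) (hlf : G.LocallyFinite) (C : Finset V) : Finset (V × V) :=
  (C ×ˢ C.biUnion (fun c => nbr G hlf c)).filter (fun p => G.Adj p.1 p.2 ∧ p.2 ∉ C)

end IsingGlauber

open IsingGlauber

/-!
Test the gap against the indicator `f` of positive magnetisation. The spin flip preserves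
the Gibbs weights and, `n` being odd, exchanges `{f = 1}` with `{f = 0}`; hence `μ(f) = 1/2`
and `Var(f) = 1/4`. Flipping a single spin changes `f` only from a configuration of
magnetisation `±1`, so `D(f) ≤ (n/4) μ(|m| = 1)`. Such a configuration has a minority set of
`(n - 1)/2` sites, whose edge boundary has at least `ε (n - 1)/2` edges, and every boundary
edge costs energy `2` relative to the all-plus ground state; comparing with that single
configuration, `μ(|m| = 1) ≤ 2ⁿ e^{-βε(n-1)}`.
-/

namespace IsingGlauber

section Gibbs

variable {V : Type*} [DecidableEq V] (E : (V → Bool) → ℝ) (A : Finset V) (η : V → Bool)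

lemma wsum_one_pos : 0 < wsum E A η (fun _ => 1) :=
  Finset.sum_pos (fun _ _ => by positivity) ⟨fun _ _ => true, by simp [Finset.mem_pi]⟩

lemma wsum_add (f g : (V → Bool) → ℝ) :
    wsum E A η (fun σ => f σ + g σ) = wsum E A η f + wsum E A η g := by
  simp only [wsum, mul_add, Finset.sum_add_distrib]

lemma wsum_const_mul (c : ℝ) (f : (V → Bool) → ℝ) :
    wsum E A η (fun σ => c * f σ) = c * wsum E A η f := by
  simp only [wsum, Finset.mul_sum, mul_left_comm]

lemma wsum_mono {f g : (V → Bool) → ℝ} (h : ∀ σ, f σ ≤ g σ) :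
    wsum E A η f ≤ wsum E A η g :=
  Finset.sum_le_sum fun _ _ => mul_le_mul_of_nonneg_left (h _) (Real.exp_nonneg _)

lemma gExp_add (f g : (V → Bool) → ℝ) :
    gExp E A η (fun σ => f σ + g σ) = gExp E A η f + gExp E A η g := by
  rw [gExp, wsum_add, add_div]; rfl

lemma gExp_const_mul (c : ℝ) (f : (V → Bool) → ℝ) :
    gExp E A η (fun σ => c * f σ) = c * gExp E A η f := by
  rw [gExp, wsum_const_mul, mul_div_assoc]; rfl

lemma gExp_const (c : ℝ) : gExp E A η (fun _ => c) = c := by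
  have := gExp_const_mul E A η c (fun _ => 1)
  simp only [mul_one] at this
  rw [this, gExp, div_self (wsum_one_pos E A η).ne', mul_one]

lemma gExp_mono {f g : (V → Bool) → ℝ} (h : ∀ σ, f σ ≤ g σ) :
    gExp E A η f ≤ gExp E A η g :=
  div_le_div_of_nonneg_right (wsum_mono E A η h) (wsum_one_pos E A η).le

lemma gExp_nonneg {f : (V → Bool) → ℝ} (h : ∀ σ, 0 ≤ f σ) : 0 ≤ gExp E A η f :=
  (gExp_const E A η 0).symm.le.trans (gExp_mono E A η h)

lemma gVar_eq_gExp_sq_sub (f : (V → Bool) → ℝ) :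
    gVar E A η f = gExp E A η (fun σ => (f σ - gExp E A η f) ^ 2) := by
  set m := gExp E A η f
  have hexpand : (fun σ => (f σ - m) ^ 2) = fun σ => f σ ^ 2 + ((-2 * m) * f σ + m ^ 2) := by
    funext σ; ring
  rw [hexpand, gExp_add, gExp_add, gExp_const_mul, gExp_const, gVar]
  ring

lemma gVar_nonneg (f : (V → Bool) → ℝ) : 0 ≤ gVar E A η f := by
  rw [gVar_eq_gExp_sq_sub]
  exact gExp_nonneg E A η fun _ => sq_nonneg _

lemma gVar_indicator (P : (V → Bool) → Prop) [DecidablePred P] :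
    gVar E A η (fun σ => if P σ then 1 else 0) = gProb E A η P * (1 - gProb E A η P) := by
  have hsq : (fun σ => (if P σ then (1 : ℝ) else 0) ^ 2) = fun σ => if P σ then 1 else 0 := by
    funext σ; split_ifs <;> norm_num
  have hprob : gProb E A η P = gExp E A η (fun σ => if P σ then 1 else 0) := by
    unfold gProb; congr!
  rw [gVar, hsq, hprob]
  ring

lemma dirich_nonneg (f : (V → Bool) → ℝ) : 0 ≤ dirich E A η f :=
  Finset.sum_nonneg fun _ _ => gExp_nonneg E A η fun σ => gVar_nonneg E {_} σ f

lemma dirich_le_of_gVar_singleton_le {f g : (V → Bool) → ℝ}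
    (h : ∀ x σ, gVar E {x} σ f ≤ g σ) : dirich E A η f ≤ A.card * gExp E A η g := by
  rw [dirich, ← nsmul_eq_mul, ← Finset.sum_const]
  exact Finset.sum_le_sum fun x _ => gExp_mono E A η (h x)

lemma cgap_le_div {f : (V → Bool) → ℝ} (hf : gVar E A η f ≠ 0) :
    cgap E A η ≤ dirich E A η f / gVar E A η f := by
  refine csInf_le ⟨0, ?_⟩ ⟨f, hf, rfl⟩
  rintro _ ⟨g, -, rfl⟩
  exact div_nonneg (dirich_nonneg E A η g) (gVar_nonneg E A η g)

lemma wsum_singleton (x : V) (f : (V → Bool) → ℝ) :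
    wsum E {x} η f = ∑ b : Bool,
      Real.exp (E (Function.update η x b)) * f (Function.update η x b) := by
  have hpatch : ∀ p : ∀ a ∈ ({x} : Finset V), Bool,
      patch {x} η p = Function.update η x (p x (Finset.mem_singleton_self x)) := by
    intro p; funext v
    by_cases h : v = x
    · subst h; simp [patch]
    · simp [patch, h]
  refine Finset.sum_nbij' (fun p => p x (Finset.mem_singleton_self x)) (fun b _ _ => b)
    (by simp) (by simp [Finset.mem_pi]) ?_ (fun _ _ => rfl) (fun p _ => by rw [hpatch])
  intro p _
  funext v hv
  obtain rfl := Finset.mem_singleton.mp hv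
  rfl

lemma gVar_singleton_le (x : V) (f : (V → Bool) → ℝ) :
    gVar E {x} η f ≤
      (f (Function.update η x true) - f (Function.update η x false)) ^ 2 / 4 := by
  set a := f (Function.update η x true)
  set b := f (Function.update η x false)
  set w₁ := Real.exp (E (Function.update η x true))
  set w₂ := Real.exp (E (Function.update η x false))
  have hw₁ : 0 < w₁ := Real.exp_pos _
  have hw₂ : 0 < w₂ := Real.exp_pos _
  have hvar : gVar E {x} η f = w₁ * w₂ * (a - b) ^ 2 / (w₁ + w₂) ^ 2 := by
    simp only [gVar, gExp, wsum_singleton, Fintype.sum_bool]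
    field_simp
    ring
  rw [hvar, div_le_div_iff₀ (by positivity) (by norm_num)]
  nlinarith [mul_nonneg (sq_nonneg (w₁ - w₂)) (sq_nonneg (a - b))]

variable [Fintype V]

lemma wsum_univ (f : (V → Bool) → ℝ) :
    wsum E Finset.univ η f = ∑ σ, Real.exp (E σ) * f σ :=
  Finset.sum_nbij' (fun p => patch Finset.univ η p) (fun σ v _ => σ v)
    (by simp) (by simp [Finset.mem_pi]) (fun _ _ => by funext v _; simp [patch])
    (fun _ _ => by funext v; simp [patch]) (fun _ _ => rfl)

lemma gProb_univ_eq_half {ι : (V → Bool) → V → Bool} (hι : Function.Involutive ι)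
    (hE : ∀ σ, E (ι σ) = E σ) {P : (V → Bool) → Prop} (hP : ∀ σ, P (ι σ) ↔ ¬ P σ) :
    gProb E Finset.univ η P = 1 / 2 := by
  have hswap : wsum E Finset.univ η (fun σ => if P σ then 1 else 0) =
      wsum E Finset.univ η (fun σ => if ¬ P σ then 1 else 0) := by
    simp only [wsum_univ]
    rw [← Equiv.sum_comp (hι.toPerm ι)]
    simp only [Function.Involutive.coe_toPerm, hE, hP]
  have htotal : wsum E Finset.univ η (fun _ => 1) =
      wsum E Finset.univ η (fun σ => if P σ then 1 else 0) +
        wsum E Finset.univ η (fun σ => if ¬ P σ then 1 else 0) := by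
    rw [← wsum_add]
    congr 1; funext σ; split_ifs <;> simp_all
  have hpos : 0 < wsum E Finset.univ η (fun σ => if P σ then 1 else 0) := by
    have := wsum_one_pos E Finset.univ η
    rw [htotal, ← hswap] at this
    linarith
  rw [gProb, gExp, htotal, ← hswap]
  field_simp
  ring

lemma gProb_univ_le_of_energy_gap (σ₀ : V → Bool) (t : ℝ) {P : (V → Bool) → Prop}
    (hgap : ∀ σ, P σ → E σ + t ≤ E σ₀) :
    gProb E Finset.univ η P ≤ 2 ^ Fintype.card V * Real.exp (-t) := by
  have hnum : wsum E Finset.univ η (fun σ => if P σ then 1 else 0) ≤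
      2 ^ Fintype.card V * Real.exp (E σ₀ - t) := by
    rw [wsum_univ]
    calc ∑ σ, Real.exp (E σ) * (if P σ then 1 else 0)
        ≤ ∑ _σ : V → Bool, Real.exp (E σ₀ - t) := by
          refine Finset.sum_le_sum fun σ _ => ?_
          split_ifs with hσ
          · rw [mul_one, Real.exp_le_exp]; linarith [hgap σ hσ]
          · rw [mul_zero]; positivity
      _ = 2 ^ Fintype.card V * Real.exp (E σ₀ - t) := by
          simp [Finset.card_univ]
  have hden : Real.exp (E σ₀) ≤ wsum E Finset.univ η (fun _ => 1) := by
    rw [wsum_univ]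
    simpa using Finset.single_le_sum (f := fun σ => Real.exp (E σ)) (fun _ _ => by positivity)
      (Finset.mem_univ σ₀)
  calc gProb E Finset.univ η P
      ≤ 2 ^ Fintype.card V * Real.exp (E σ₀ - t) / Real.exp (E σ₀) :=
        div_le_div₀ (by positivity) hnum (Real.exp_pos _) hden
    _ = 2 ^ Fintype.card V * Real.exp (-t) := by
        rw [mul_div_assoc, ← Real.exp_sub, sub_sub_cancel_left]

end Gibbs

section Magnetization

variable {V : Type*} [Fintype V]

def upCount (σ : V → Bool) : ℕ := (Finset.univ.filter fun v => σ v = true).card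

/-- Magnetisation `2 · upCount σ - |V|` equal to `±1`. -/
def IsBalanced (σ : V → Bool) : Prop :=
  2 * upCount σ + 1 = Fintype.card V ∨ 2 * upCount σ = Fintype.card V + 1

lemma upCount_not_add (σ : V → Bool) :
    upCount (fun v => !σ v) + upCount σ = Fintype.card V := by
  simp only [upCount, Bool.not_eq_true']
  rw [add_comm, ← Finset.card_univ]
  simpa using Finset.card_filter_add_card_filter_not (s := Finset.univ) (fun v => σ v = true)

lemma majority_not_iff (hodd : Odd (Fintype.card V)) (σ : V → Bool) :
    Fintype.card V < 2 * upCount (fun v => !σ v) ↔ ¬ Fintype.card V < 2 * upCount σ := by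
  have := upCount_not_add σ
  obtain ⟨k, hk⟩ := hodd
  omega

lemma exists_minority_set_of_isBalanced {σ : V → Bool} (hσ : IsBalanced σ) :
    ∃ S : Finset V, (∀ u ∈ S, ∀ v ∉ S, σ u ≠ σ v) ∧ 2 * S.card + 1 = Fintype.card V := by
  have hflip := upCount_not_add σ
  rcases hσ with hσ | hσ
  · refine ⟨Finset.univ.filter fun v => σ v = true, ?_, hσ⟩
    simp_all
  · refine ⟨Finset.univ.filter fun v => (!σ v) = true, ?_, ?_⟩
    · simp_all
    · change 2 * upCount (fun v => !σ v) + 1 = _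
      omega

variable [DecidableEq V]

lemma upCount_update_true (σ : V → Bool) (x : V) :
    upCount (Function.update σ x true) = upCount (Function.update σ x false) + 1 := by
  have hinsert : (Finset.univ.filter fun v => Function.update σ x true v = true) =
      insert x (Finset.univ.filter fun v => Function.update σ x false v = true) := by
    ext v
    by_cases h : v = x
    · subst h; simp
    · simp [h]
  rw [upCount, upCount, hinsert, Finset.card_insert_of_notMem (by simp)]

lemma majority_update_iff_of_not_isBalanced (hodd : Odd (Fintype.card V)) {σ : V → Bool}
    (hσ : ¬ IsBalanced σ) (x : V) :
    Fintype.card V < 2 * upCount (Function.update σ x true) ↔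
      Fintype.card V < 2 * upCount (Function.update σ x false) := by
  have hup := upCount_update_true σ x
  have hself : upCount σ = upCount (Function.update σ x (σ x)) := by
    rw [Function.update_eq_self]
  obtain ⟨k, hk⟩ := hodd
  unfold IsBalanced at hσ
  cases hx : σ x <;> rw [hx] at hself <;> omega

end Magnetization

section Energy

variable {V : Type*} (G : SimpleGraph V)

lemma spin_not (b : Bool) : spin (!b) = -spin b := by
  cases b <;> simp [spin]

lemma energyF_not (A : Finset V) (σ : V → Bool) :
    energyF G A (fun v => !σ v) = energyF G A σ := by
  simp only [energyF, spin_not, neg_mul_neg]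

variable [Fintype V]

def cutPairs (σ : V → Bool) : Finset (V × V) :=
  Finset.univ.filter fun p => G.Adj p.1 p.2 ∧ σ p.1 ≠ σ p.2

lemma energyF_univ_add_card_cutPairs (σ : V → Bool) :
    energyF G Finset.univ σ + (cutPairs G σ).card = energyF G Finset.univ (fun _ => true) := by
  have hcut : ((cutPairs G σ).card : ℝ) = ∑ x, ∑ y ∈ Finset.univ.filter (fun y => G.Adj x y),
      if σ x ≠ σ y then 1 else 0 := by
    simp only [cutPairs, Finset.card_filter, Fintype.sum_prod_type, Finset.sum_filter]
    push_cast
    refine Finset.sum_congr rfl fun x _ => Finset.sum_congr rfl fun y _ => ?_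
    by_cases hxy : G.Adj x y <;> simp [hxy]
  have hterm : ∀ a b : Bool,
      spin a * spin b + 2 * (if a ≠ b then 1 else 0) = spin true * spin true := by
    intro a b; cases a <;> cases b <;> norm_num [spin]
  have htop : energyF G Finset.univ (fun _ => true) =
      (1 / 2) * ∑ x, ∑ y ∈ Finset.univ.filter (fun y => G.Adj x y),
        (spin (σ x) * spin (σ y) + 2 * if σ x ≠ σ y then 1 else 0) := by
    rw [energyF]
    congr 1
    exact Finset.sum_congr rfl fun x _ => Finset.sum_congr rfl fun y _ => (hterm _ _).symm
  rw [htop, hcut, energyF]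
  simp only [Finset.sum_add_distrib, ← Finset.mul_sum]
  ring

variable [DecidableEq V]

lemma two_mul_card_boundary_le_card_cutPairs (σ : V → Bool) (S : Finset V)
    (hS : ∀ u ∈ S, ∀ v ∉ S, σ u ≠ σ v) :
    2 * ((S ×ˢ Sᶜ).filter fun p => G.Adj p.1 p.2).card ≤ (cutPairs G σ).card := by
  set X := (S ×ˢ Sᶜ).filter fun p => G.Adj p.1 p.2
  set swapX := X.map (Equiv.prodComm V V).toEmbedding
  have hdisj : Disjoint X swapX := by
    refine Finset.disjoint_left.mpr fun p hp hq => ?_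
    simp only [X, swapX, Finset.mem_map_equiv, Finset.mem_filter, Finset.mem_product,
      Finset.mem_compl, Equiv.prodComm_symm, Equiv.prodComm_apply, Prod.fst_swap,
      Prod.snd_swap] at hp hq
    exact hp.1.2 hq.1.1
  have hsub : X ∪ swapX ⊆ cutPairs G σ := by
    intro p hp
    simp only [X, swapX, Finset.mem_union, Finset.mem_map_equiv, Finset.mem_filter,
      Finset.mem_product, Finset.mem_compl, Equiv.prodComm_symm, Equiv.prodComm_apply,
      Prod.fst_swap, Prod.snd_swap] at hp
    simp only [cutPairs, Finset.mem_filter, Finset.mem_univ, true_and]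
    rcases hp with ⟨⟨hu, hv⟩, hadj⟩ | ⟨⟨hu, hv⟩, hadj⟩
    · exact ⟨hadj, hS _ hu _ hv⟩
    · exact ⟨hadj.symm, (hS _ hu _ hv).symm⟩
  calc 2 * X.card = (X ∪ swapX).card := by
        rw [Finset.card_union_of_disjoint hdisj, Finset.card_map]; ring
    _ ≤ (cutPairs G σ).card := Finset.card_le_card hsub

lemma energyF_univ_add_le_of_isBalanced {ε : ℝ}
    (hiso : ∀ S : Finset V, S.Nonempty → 2 * S.card ≤ Fintype.card V →
      ε * (S.card : ℝ) ≤ (((S ×ˢ Sᶜ).filter (fun p => G.Adj p.1 p.2)).card : ℝ))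
    {σ : V → Bool} (hσ : IsBalanced σ) :
    energyF G Finset.univ σ + ε * ((Fintype.card V : ℝ) - 1) ≤
      energyF G Finset.univ (fun _ => true) := by
  obtain ⟨S, hSσ, hScard⟩ := exists_minority_set_of_isBalanced hσ
  have hn : (Fintype.card V : ℝ) - 1 = 2 * S.card := by
    rw [← hScard]; push_cast; ring
  have hcut : ε * ((Fintype.card V : ℝ) - 1) ≤ (cutPairs G σ).card := by
    rcases S.eq_empty_or_nonempty with rfl | hne
    · simp [hn]
    · have hbd : (2 * ((S ×ˢ Sᶜ).filter fun p => G.Adj p.1 p.2).card : ℝ) ≤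
          (cutPairs G σ).card := by
        exact_mod_cast two_mul_card_boundary_le_card_cutPairs G σ S hSσ
      rw [hn]
      linarith [hiso S hne (by omega)]
  linarith [energyF_univ_add_card_cutPairs G σ]

end Energy

section Glauber

variable {V : Type*} [Fintype V] [DecidableEq V]

lemma gVar_majority (hodd : Odd (Fintype.card V)) (E : (V → Bool) → ℝ)
    (hE : ∀ σ, E (fun v => !σ v) = E σ) (η : V → Bool) :
    gVar E Finset.univ η (fun σ => if Fintype.card V < 2 * upCount σ then 1 else 0) = 1 / 4 := by
  have hflip : Function.Involutive fun (σ : V → Bool) v => !σ v := fun σ => by simp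
  rw [gVar_indicator, gProb_univ_eq_half E η hflip hE (majority_not_iff hodd)]
  norm_num

lemma gVar_singleton_majority_le (hodd : Odd (Fintype.card V)) (E : (V → Bool) → ℝ)
    (x : V) (σ : V → Bool) :
    gVar E {x} σ (fun σ => if Fintype.card V < 2 * upCount σ then 1 else 0) ≤
      1 / 4 * if IsBalanced σ then 1 else 0 := by
  refine (gVar_singleton_le E σ x _).trans ?_
  by_cases hσ : IsBalanced σ
  · rw [if_pos hσ]
    split_ifs <;> norm_num
  · simp [hσ, majority_update_iff_of_not_isBalanced hodd hσ x]

theorem cgap_ising_le {ε β : ℝ} (G : SimpleGraph V) (hodd : Odd (Fintype.card V))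
    (hiso : ∀ S : Finset V, S.Nonempty → 2 * S.card ≤ Fintype.card V →
      ε * (S.card : ℝ) ≤ (((S ×ˢ Sᶜ).filter (fun p => G.Adj p.1 p.2)).card : ℝ))
    (hβ : 0 ≤ β) :
    cgap (fun σ => β * energyF G Finset.univ σ) Finset.univ (fun _ => true) ≤
      Fintype.card V * 2 ^ Fintype.card V * Real.exp (-β * ε * ((Fintype.card V : ℝ) - 1)) := by
  set n := Fintype.card V
  set E : (V → Bool) → ℝ := fun σ => β * energyF G Finset.univ σ
  set η : V → Bool := fun _ => true
  set f : (V → Bool) → ℝ := fun σ => if n < 2 * upCount σ then 1 else 0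
  have hvar : gVar E Finset.univ η f = 1 / 4 :=
    gVar_majority hodd E (fun σ => by simp only [E, energyF_not]) η
  have hdir : dirich E Finset.univ η f ≤ n * (1 / 4 * gProb E Finset.univ η IsBalanced) := by
    have := dirich_le_of_gVar_singleton_le E Finset.univ η (gVar_singleton_majority_le hodd E)
    rwa [gExp_const_mul, Finset.card_univ] at this
  have hprob : gProb E Finset.univ η IsBalanced ≤ 2 ^ n * Real.exp (-(β * ε * (n - 1))) := by
    refine gProb_univ_le_of_energy_gap E η η _ fun σ hσ => ?_
    have := mul_le_mul_of_nonneg_left (energyF_univ_add_le_of_isBalanced G hiso hσ) hβ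
    simp only [E, η]
    linarith
  calc cgap E Finset.univ η ≤ dirich E Finset.univ η f / gVar E Finset.univ η f :=
        cgap_le_div E Finset.univ η (by rw [hvar]; norm_num)
    _ ≤ n * (1 / 4 * (2 ^ n * Real.exp (-(β * ε * (n - 1))))) / (1 / 4) := by
        rw [hvar]; gcongr
        exact hdir.trans (by gcongr)
    _ = n * 2 ^ n * Real.exp (-β * ε * (n - 1)) := by
        rw [neg_mul, neg_mul]; ring

end Glauber

open Filter Topology in
lemma exists_pos_bound_le_exp {ε β : ℝ} (hε : 0 < ε) (hβ : Real.log 2 / ε < β) :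
    ∃ θ : ℝ, 0 < θ ∧ ∃ N : ℕ, ∀ n : ℕ, N ≤ n →
      2 * ((n : ℝ) + 2) * 2 ^ n * Real.exp (-β * ε * ((n : ℝ) - 1)) ≤ Real.exp (-θ * n) := by
  have hβε : Real.log 2 < β * ε := (div_lt_iff₀ hε).mp hβ
  -- `θ` is half the decay rate `βε - log 2`; the other half beats the prefactor `n + 2`.
  set θ := (β * ε - Real.log 2) / 2
  have hθ : 0 < θ := by simp only [θ]; linarith
  set r := Real.exp (-θ)
  have hr0 : 0 ≤ r := (Real.exp_pos _).le
  have hr1 : r < 1 := Real.exp_lt_one_iff.mpr (neg_lt_zero.mpr hθ)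
  have hlim : Tendsto (fun n : ℕ => 2 * Real.exp (β * ε) * ((n + 2) * r ^ n)) atTop (𝓝 0) := by
    have := (tendsto_self_mul_const_pow_of_lt_one hr0 hr1).add
      ((tendsto_pow_atTop_nhds_zero_of_lt_one hr0 hr1).const_mul 2)
    simpa [add_mul] using this.const_mul (2 * Real.exp (β * ε))
  obtain ⟨N, hN⟩ := eventually_atTop.mp (hlim.eventually_lt_const one_pos)
  refine ⟨θ, hθ, N, fun n hn => ?_⟩
  have hexp : (2 : ℝ) ^ n * Real.exp (-β * ε * ((n : ℝ) - 1)) =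
      Real.exp (β * ε) * r ^ n * Real.exp (-θ * n) := by
    rw [← Real.exp_log two_pos, ← Real.exp_nat_mul, ← Real.exp_nat_mul, ← Real.exp_add,
      ← Real.exp_add, ← Real.exp_add]
    congr 1
    simp only [θ]
    ring
  calc 2 * ((n : ℝ) + 2) * 2 ^ n * Real.exp (-β * ε * ((n : ℝ) - 1))
      = 2 * Real.exp (β * ε) * ((n + 2) * r ^ n) * Real.exp (-θ * n) := by
        linear_combination (2 * ((n : ℝ) + 2)) * hexp
    _ ≤ 1 * Real.exp (-θ * n) := mul_le_mul_of_nonneg_right (hN n hn).le (Real.exp_pos _).le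
    _ = Real.exp (-θ * n) := one_mul _

end IsingGlauber

/-- Proposition 5.4 of the paper: on a finite connected graph with odd
`n = |V|` and edge isoperimetric constant at least `ε > 0`, the free-boundary
heat-bath Glauber dynamics has spectral gap at most `2(n+2) 2^n e^{-βε(n-1)}`;
in particular, for every `β > log 2 / ε` there is `θ > 0` with
`c_gap(μ) ≤ e^{-θn}` for all sufficiently large `n`. -/
theorem statement18 (ε : ℝ) (hε : 0 < ε) :
    (∀ (V : Type) (_ : Fintype V) (_ : DecidableEq V) (G : SimpleGraph V),
      G.Connected → Odd (Fintype.card V) →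
      (∀ S : Finset V, S.Nonempty → 2 * S.card ≤ Fintype.card V →
        ε * (S.card : ℝ) ≤ (((S ×ˢ Sᶜ).filter (fun p => G.Adj p.1 p.2)).card : ℝ)) →
      ∀ β : ℝ, 0 < β →
        cgap (fun σ => β * energyF G Finset.univ σ) Finset.univ (fun _ => true) ≤
          2 * ((Fintype.card V : ℝ) + 2) * 2 ^ Fintype.card V *
            Real.exp (-β * ε * ((Fintype.card V : ℝ) - 1))) ∧
    ∀ β : ℝ, Real.log 2 / ε < β → ∃ θ : ℝ, 0 < θ ∧ ∃ N : ℕ,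
      ∀ (V : Type) (_ : Fintype V) (_ : DecidableEq V) (G : SimpleGraph V),
        G.Connected → Odd (Fintype.card V) →
        (∀ S : Finset V, S.Nonempty → 2 * S.card ≤ Fintype.card V →
          ε * (S.card : ℝ) ≤ (((S ×ˢ Sᶜ).filter (fun p => G.Adj p.1 p.2)).card : ℝ)) →
        N ≤ Fintype.card V →
        cgap (fun σ => β * energyF G Finset.univ σ) Finset.univ (fun _ => true) ≤
          Real.exp (-θ * (Fintype.card V : ℝ)) := by
  refine (fun hbound => ⟨hbound, fun β hβ => ?_⟩) ?_
  · intro V _ _ G _ hodd hiso β hβ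
    refine (cgap_ising_le G hodd hiso hβ.le).trans ?_
    gcongr
    linarith
  · have hβpos : 0 < β := (div_pos (Real.log_pos one_lt_two) hε).trans hβ
    obtain ⟨θ, hθ, N, hN⟩ := exists_pos_bound_le_exp hε hβ
    exact ⟨θ, hθ, N, fun V _ _ G hG hodd hiso hN' =>
      (hbound V _ _ G hG hodd hiso β hβpos).trans (hN _ hN')⟩
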